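/- arXiv:1701.03040 — 2 statements merged into one kernel-verified Lean document; each statement's English description precedes it below -/
import Mathlib

section
/- Let X be an independent set of G with d(X) = k > 0 such that every proper subset Y ⊊ X satisfies d(Y) < k. Then X can be written as a union of k distinct inclusion-minimal sets with positive difference. -/
open Classical Finset

/-- Neighborhood of a set of vertices: all vertices adjacent to some vertex of `X`. -/
noncomputable def nbhd {V : Type*} (G : SimpleGraph V) [Fintype V] (X : Finset V) : Finset V :=
  Finset.univ.filter (fun v => ∃ x ∈ X, G.Adj x v)

/-- The difference `d(X) = |X| - |N(X)|`. -/
noncomputable def gdiff {V : Type*} (G : SimpleGraph V) [Fintype V] (X : Finset V) : ℤ :=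
  (X.card : ℤ) - ((nbhd G X).card : ℤ)

/-- `X` is an independent set of `G`. -/
def IsIndep {V : Type*} (G : SimpleGraph V) (X : Finset V) : Prop :=
  ∀ x ∈ X, ∀ y ∈ X, ¬ G.Adj x y

/-- The critical difference `d_c(G) = max { d(X) : X ⊆ V(G) }`. -/
noncomputable def critDiff {V : Type*} (G : SimpleGraph V) [Fintype V] : ℤ :=
  Finset.univ.powerset.sup' ⟨∅, Finset.empty_mem_powerset _⟩ (gdiff G)

/-- `X` is a critical set of `G`. -/
noncomputable def IsCritical {V : Type*} (G : SimpleGraph V) [Fintype V] (X : Finset V) : Prop :=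
  gdiff G X = critDiff G

/-- `ker G` : the intersection of all critical sets of `G`. -/
noncomputable def kerG {V : Type*} (G : SimpleGraph V) [Fintype V] : Finset V :=
  Finset.univ.filter (fun v => ∀ X : Finset V, IsCritical G X → v ∈ X)

/-- `diadem G` : the union of all critical independent sets of `G`. -/
noncomputable def diademG {V : Type*} (G : SimpleGraph V) [Fintype V] : Finset V :=
  Finset.univ.filter (fun v => ∃ X : Finset V, IsCritical G X ∧ IsIndep G X ∧ v ∈ X)

/-- The independence number `α(G)`. -/
noncomputable def alphaG {V : Type*} (G : SimpleGraph V) [Fintype V] : ℕ :=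
  (Finset.univ.powerset.filter (IsIndep G)).sup Finset.card

/-- `core G` : the intersection of all maximum independent sets of `G`. -/
noncomputable def coreG {V : Type*} (G : SimpleGraph V) [Fintype V] : Finset V :=
  Finset.univ.filter (fun v => ∀ I : Finset V, IsIndep G I → I.card = alphaG G → v ∈ I)

/-- `M` is a matching of `G`, given as a finite set of pairwise disjoint edges of `G`. -/
def IsMatchingF {V : Type*} (G : SimpleGraph V) (M : Finset (Sym2 V)) : Prop :=
  (↑M : Set (Sym2 V)) ⊆ G.edgeSet ∧
    ∀ e₁ ∈ M, ∀ e₂ ∈ M, e₁ ≠ e₂ → ∀ v : V, v ∈ e₁ → v ∉ e₂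

/-- The matching number `μ(G)`. -/
noncomputable def matchNum {V : Type*} (G : SimpleGraph V) [Fintype V] : ℕ :=
  ((Finset.univ : Finset (Finset (Sym2 V))).filter (IsMatchingF G)).sup Finset.card

/-- There is a matching from `A` into `B`: an injection of `A` into `B` along edges of `G`. -/
def MatchingFromInto {V : Type*} (G : SimpleGraph V) (A B : Finset V) : Prop :=
  ∃ f : V → V, Set.InjOn f ↑A ∧ ∀ a ∈ A, f a ∈ B ∧ G.Adj a (f a)

/-- The auxiliary bipartite graph `H_X` on vertex set `X ∪ N(X) ∪ {v, w}`, where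
`v = Sum.inr false` and `w = Sum.inr true`.  Its edges are the edges of `G` between
`X` and `N(X)`, the edge `vw`, and all edges from `v` to `N(X)`. -/
noncomputable def HX {V : Type*} (G : SimpleGraph V) [Fintype V] (X : Finset V) :
    SimpleGraph ({a : V // a ∈ X ∪ nbhd G X} ⊕ Bool) :=
  SimpleGraph.fromRel (fun p q =>
    match p, q with
    | Sum.inl a, Sum.inl b => a.1 ∈ X ∧ b.1 ∈ nbhd G X ∧ G.Adj a.1 b.1
    | Sum.inr false, Sum.inr true => True
    | Sum.inr false, Sum.inl b => b.1 ∈ nbhd G X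
    | _, _ => False)

/-- The copy of `X` inside the vertex set of `H_X`. -/
noncomputable def Xlift {V : Type*} (G : SimpleGraph V) [Fintype V] (X : Finset V) :
    Finset ({a : V // a ∈ X ∪ nbhd G X} ⊕ Bool) :=
  Finset.univ.filter (fun p => ∃ a : {a : V // a ∈ X ∪ nbhd G X}, p = Sum.inl a ∧ a.1 ∈ X)

/-- Edmonds–Gallai set `D`: vertices missed by some maximum matching. -/
noncomputable def gallaiD {V : Type*} (G : SimpleGraph V) [Fintype V] : Finset V :=
  Finset.univ.filter (fun v => ∃ M : Finset (Sym2 V),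
    IsMatchingF G M ∧ M.card = matchNum G ∧ ∀ e ∈ M, v ∉ e)

/-- Edmonds–Gallai set `A = N(D) - D`. -/
noncomputable def gallaiA {V : Type*} (G : SimpleGraph V) [Fintype V] : Finset V :=
  nbhd G (gallaiD G) \ gallaiD G

/-- Edmonds–Gallai set `C = V - A - D`. -/
noncomputable def gallaiC {V : Type*} (G : SimpleGraph V) [Fintype V] : Finset V :=
  (Finset.univ \ gallaiD G) \ gallaiA G

/-- The vertices of the singleton components of `G[D]`. -/
noncomputable def singlesD {V : Type*} (G : SimpleGraph V) [Fintype V] : Finset V :=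
  (gallaiD G).filter (fun v => ∀ w ∈ gallaiD G, ¬ G.Adj v w)


section Stmt5Aux

variable {V : Type*} (G : SimpleGraph V) [Fintype V] [DecidableEq V]

lemma mem_nbhd_iff {A : Finset V} {v : V} : v ∈ nbhd G A ↔ ∃ a ∈ A, G.Adj a v := by
  simp [nbhd]

lemma nbhd_mono {A B : Finset V} (h : A ⊆ B) : nbhd G A ⊆ nbhd G B := by
  intro v hv
  rw [mem_nbhd_iff] at hv ⊢
  obtain ⟨a, ha, hadj⟩ := hv
  exact ⟨a, h ha, hadj⟩

end Stmt5Aux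

/-- such an `X` with `d(X) = k > 0` is a union of `k` distinct
inclusion-minimal sets with positive difference. -/
theorem stmt5 {V : Type*} (G : SimpleGraph V) [Fintype V] [DecidableEq V] [DecidableRel G.Adj]
    (X : Finset V) (k : ℕ) (hind : IsIndep G X) (hk : gdiff G X = (k : ℤ)) (hkpos : 0 < k)
    (hmin : ∀ Y ⊂ X, gdiff G Y < gdiff G X) :
    ∃ 𝒮 : Finset (Finset V), 𝒮.card = k ∧
      (∀ S ∈ 𝒮, 0 < gdiff G S ∧ ∀ T ⊂ S, gdiff G T ≤ 0) ∧
      X = 𝒮.biUnion id := by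
  classical
  set N : Finset V := nbhd G X with hN
  -- Hall's condition and matching
  have hNsrc : ∀ v ∈ N, ∃ x ∈ X, G.Adj x v := by
    intro v hv; rwa [hN, mem_nbhd_iff] at hv
  set t : {u : V // u ∈ N} → Finset V := fun u => X.filter (fun x => G.Adj x u.1) with ht
  have hkX : (X.card : ℤ) - (N.card : ℤ) = (k : ℤ) := hk
  have hall : ∀ s : Finset {u : V // u ∈ N}, s.card ≤ (s.biUnion t).card := by
    intro s
    by_contra hcon
    push_neg at hcon
    set U : Finset V := s.image Subtype.val with hU
    have hUcard : U.card = s.card := Finset.card_image_of_injOn (fun a _ b _ h => Subtype.ext h)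
    set B : Finset V := s.biUnion t with hB
    have hBX : B ⊆ X := by
      intro y hy
      rw [hB, Finset.mem_biUnion] at hy
      obtain ⟨u, _, hyu⟩ := hy
      exact (Finset.mem_filter.mp hyu).1
    have hsne : s.Nonempty := by
      rcases s.eq_empty_or_nonempty with h | h
      · subst h; simp at hcon
      · exact h
    have hBne : B.Nonempty := by
      obtain ⟨u, hu⟩ := hsne
      obtain ⟨x, hx, hadj⟩ := hNsrc u.1 u.2
      exact ⟨x, Finset.mem_biUnion.mpr ⟨u, hu, Finset.mem_filter.mpr ⟨hx, hadj⟩⟩⟩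
    set Y : Finset V := X \ B with hY
    have hYX : Y ⊂ X := by
      refine Finset.ssubset_iff_of_subset (Finset.sdiff_subset) |>.mpr ?_
      obtain ⟨b, hb⟩ := hBne
      exact ⟨b, hBX hb, by simp [hY, hb]⟩
    have hYsub : nbhd G Y ⊆ N \ U := by
      intro v hv
      rw [mem_nbhd_iff] at hv
      obtain ⟨y, hy, hadj⟩ := hv
      have hyX : y ∈ X := (Finset.mem_sdiff.mp hy).1
      have hvN : v ∈ N := by rw [hN, mem_nbhd_iff]; exact ⟨y, hyX, hadj⟩
      refine Finset.mem_sdiff.mpr ⟨hvN, ?_⟩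
      intro hvU
      rw [hU, Finset.mem_image] at hvU
      obtain ⟨u, hus, huv⟩ := hvU
      have : y ∈ B := Finset.mem_biUnion.mpr ⟨u, hus,
        Finset.mem_filter.mpr ⟨hyX, by rwa [huv]⟩⟩
      exact (Finset.mem_sdiff.mp hy).2 this
    have hUN : U ⊆ N := by
      intro v hv
      rw [hU, Finset.mem_image] at hv
      obtain ⟨u, _, huv⟩ := hv
      exact huv ▸ u.2
    have h1 : (nbhd G Y).card ≤ N.card - U.card := by
      calc (nbhd G Y).card ≤ (N \ U).card := Finset.card_le_card hYsub
        _ = N.card - U.card := Finset.card_sdiff_of_subset hUN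
    have h2 : Y.card = X.card - B.card := Finset.card_sdiff_of_subset hBX
    have h3 : U.card ≤ N.card := Finset.card_le_card hUN
    have h4 : B.card ≤ X.card := Finset.card_le_card hBX
    have h5 : gdiff G Y < gdiff G X := hmin Y hYX
    have h6 : gdiff G Y = (Y.card : ℤ) - ((nbhd G Y).card : ℤ) := rfl
    rw [h6, hk] at h5
    omega
  obtain ⟨f, hfinj, hft⟩ := (Finset.all_card_le_biUnion_card_iff_exists_injective t).mp hall
  have hfX : ∀ u, f u ∈ X ∧ G.Adj (f u) u.1 := by
    intro u
    have := hft u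
    rw [ht] at this
    exact Finset.mem_filter.mp this
  -- the partner function g
  set g : V → V := fun v => if h : v ∈ N then f ⟨v, h⟩ else v with hg
  have hgX : ∀ v ∈ N, g v ∈ X ∧ G.Adj (g v) v := by
    intro v hv
    simp only [hg, dif_pos hv]
    exact hfX ⟨v, hv⟩
  have hginj : Set.InjOn g ↑N := by
    intro a ha b hb hab
    have ha' : a ∈ N := ha
    have hb' : b ∈ N := hb
    simp only [hg, dif_pos ha', dif_pos hb'] at hab
    exact congrArg Subtype.val (hfinj hab)
  set M : Finset V := N.image g with hM
  have hMX : M ⊆ X := by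
    intro y hy
    rw [hM, Finset.mem_image] at hy
    obtain ⟨u, hu, huy⟩ := hy
    exact huy ▸ (hgX u hu).1
  have hMcard : M.card = N.card := Finset.card_image_of_injOn hginj
  set U₀ : Finset V := X \ M with hU₀
  have hU₀card : U₀.card = k := by
    have h1 : U₀.card = X.card - M.card := by rw [hU₀]; exact Finset.card_sdiff_of_subset hMX
    have h2 : M.card ≤ X.card := Finset.card_le_card hMX
    omega
  -- the step relation and reachable sets
  set step : V → V → Prop := fun y z => ∃ u ∈ N, G.Adj y u ∧ g u = z with hstep
  set S : V → Finset V := fun x => X.filter (fun y => Relation.ReflTransGen step x y) with hS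
  have hSsub : ∀ x, S x ⊆ X := fun x => Finset.filter_subset _ _
  have hSx : ∀ x ∈ X, x ∈ S x := fun x hx => Finset.mem_filter.mpr ⟨hx, .refl⟩
  have hmemS : ∀ x y, y ∈ S x → y = x ∨ y ∈ M := by
    intro x y hy
    have hr : Relation.ReflTransGen step x y := (Finset.mem_filter.mp hy).2
    rcases Relation.ReflTransGen.cases_tail hr with h | ⟨c, _, hc⟩
    · exact Or.inl h
    · obtain ⟨u, hu, _, hguy⟩ := hc
      exact Or.inr (hguy ▸ Finset.mem_image_of_mem g hu)
  have hSclosed : ∀ x, ∀ y ∈ S x, ∀ u ∈ N, G.Adj y u → g u ∈ S x := by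
    intro x y hy u hu hadj
    have hr : Relation.ReflTransGen step x y := (Finset.mem_filter.mp hy).2
    exact Finset.mem_filter.mpr ⟨(hgX u hu).1, hr.tail ⟨u, hu, hadj, rfl⟩⟩
  -- the key cardinality lemma for step-closed sets
  have key : ∀ A : Finset V, A ⊆ X → (∀ y ∈ A, ∀ u ∈ N, G.Adj y u → g u ∈ A) →
      A.card = (A ∩ U₀).card + (nbhd G A).card := by
    intro A hAX hAcl
    have hnbN : nbhd G A ⊆ N := hN ▸ nbhd_mono G hAX
    have himg : A \ U₀ = (nbhd G A).image g := by
      ext y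
      constructor
      · intro hy
        obtain ⟨hyA, hyU⟩ := Finset.mem_sdiff.mp hy
        have hyM : y ∈ M := by
          by_contra hc
          exact hyU (Finset.mem_sdiff.mpr ⟨hAX hyA, hc⟩)
        rw [hM, Finset.mem_image] at hyM
        obtain ⟨u, hu, huy⟩ := hyM
        have hadj : G.Adj y u := huy ▸ (hgX u hu).2
        have : u ∈ nbhd G A := (mem_nbhd_iff G).mpr ⟨y, hyA, hadj⟩
        exact Finset.mem_image.mpr ⟨u, this, huy⟩
      · intro hy
        rw [Finset.mem_image] at hy
        obtain ⟨u, hu, huy⟩ := hy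
        obtain ⟨a, ha, hadj⟩ := (mem_nbhd_iff G).mp hu
        have hgA : g u ∈ A := hAcl a ha u (hnbN hu) hadj
        have hgM : g u ∈ M := Finset.mem_image_of_mem g (hnbN hu)
        refine Finset.mem_sdiff.mpr ⟨huy ▸ hgA, ?_⟩
        intro hc
        exact (Finset.mem_sdiff.mp hc).2 (huy ▸ hgM)
    have hc1 : (A \ U₀).card = (nbhd G A).card := by
      rw [himg, Finset.card_image_of_injOn (hginj.mono (by exact_mod_cast hnbN))]
    have := Finset.card_inter_add_card_sdiff A U₀
    omega
  -- the inverse partner function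
  set uo : V → V := fun y => if h : ∃ u, u ∈ N ∧ g u = y then h.choose else y with huo
  have huoM : ∀ y ∈ M, uo y ∈ N ∧ g (uo y) = y := by
    intro y hy
    rw [hM, Finset.mem_image] at hy
    obtain ⟨u, hu, huy⟩ := hy
    have hex : ∃ u, u ∈ N ∧ g u = y := ⟨u, hu, huy⟩
    simp only [huo, dif_pos hex]
    exact hex.choose_spec
  -- gdiff of S x for unmatched x
  have hSU₀ : ∀ x ∈ U₀, S x ∩ U₀ = {x} := by
    intro x hx
    have hxX : x ∈ X := (Finset.mem_sdiff.mp hx).1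
    ext y
    simp only [Finset.mem_inter, Finset.mem_singleton]
    constructor
    · rintro ⟨hyS, hyU⟩
      rcases hmemS x y hyS with h | h
      · exact h
      · exact absurd h (Finset.mem_sdiff.mp hyU).2
    · rintro rfl
      exact ⟨hSx _ hxX, hx⟩
  have hScard : ∀ x ∈ U₀, gdiff G (S x) = 1 := by
    intro x hx
    have := key (S x) (hSsub x) (hSclosed x)
    rw [hSU₀ x hx] at this
    simp only [Finset.card_singleton] at this
    have h6 : gdiff G (S x) = ((S x).card : ℤ) - ((nbhd G (S x)).card : ℤ) := rfl
    rw [h6]; omega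
  -- minimality of S x
  have hSmin : ∀ x ∈ U₀, ∀ T ⊂ S x, gdiff G T ≤ 0 := by
    intro x hx T hT
    have hTS : T ⊆ S x := hT.subset
    have hTX : T ⊆ X := hTS.trans (hSsub x)
    have hTM : ∀ y ∈ T \ {x}, y ∈ M := by
      intro y hy
      obtain ⟨hyT, hyx⟩ := Finset.mem_sdiff.mp hy
      rcases hmemS x y (hTS hyT) with h | h
      · exact absurd h (by simpa using hyx)
      · exact h
    have hinj : Set.InjOn uo ↑(T \ {x}) := by
      intro a ha b hb hab
      have hga := (huoM a (hTM a ha)).2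
      have hgb := (huoM b (hTM b hb)).2
      rw [← hga, ← hgb, hab]
    have hmap : ∀ y ∈ T \ {x}, uo y ∈ nbhd G T := by
      intro y hy
      obtain ⟨hu1, hu2⟩ := huoM y (hTM y hy)
      have hadj : G.Adj y (uo y) := by
        have := (hgX (uo y) hu1).2
        rwa [hu2] at this
      exact (mem_nbhd_iff G).mpr ⟨y, (Finset.mem_sdiff.mp hy).1, hadj⟩
    have hle : (T \ {x}).card ≤ (nbhd G T).card :=
      Finset.card_le_card_of_injOn uo hmap hinj
    have hgd : gdiff G T = (T.card : ℤ) - ((nbhd G T).card : ℤ) := rfl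
    by_cases hxT : x ∈ T
    · -- x ∈ T : show card T ≤ card nbhd T
      have hcardT : (T \ {x}).card + 1 = T.card := by
        have : ({x} : Finset V) ⊆ T := Finset.singleton_subset_iff.mpr hxT
        have := Finset.card_sdiff_of_subset this
        simp only [Finset.card_singleton] at this
        have hx1 : 1 ≤ T.card := Finset.card_pos.mpr ⟨x, hxT⟩
        omega
      by_contra hcon
      push_neg at hcon
      rw [hgd] at hcon
      have hlt : (nbhd G T).card < T.card := by omega
      have heq : (nbhd G T).card = (T \ {x}).card := by omega
      have himeq : (T \ {x}).image uo = nbhd G T := by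
        apply Finset.eq_of_subset_of_card_le
        · intro v hv
          rw [Finset.mem_image] at hv
          obtain ⟨y, hy, hyv⟩ := hv
          exact hyv ▸ hmap y hy
        · rw [Finset.card_image_of_injOn hinj]; omega
      have hTclosed : ∀ y ∈ T, ∀ u ∈ N, G.Adj y u → g u ∈ T := by
        intro y hy u hu hadj
        have huT : u ∈ nbhd G T := (mem_nbhd_iff G).mpr ⟨y, hy, hadj⟩
        rw [← himeq, Finset.mem_image] at huT
        obtain ⟨y', hy', hy'u⟩ := huT
        have := (huoM y' (hTM y' hy')).2
        rw [← hy'u, this]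
        exact (Finset.mem_sdiff.mp hy').1
      have hreach : ∀ y, Relation.ReflTransGen step x y → y ∈ T := by
        intro y hr
        induction hr with
        | refl => exact hxT
        | @tail b c hxb hbc ih =>
          obtain ⟨u, hu, hadj, hgu⟩ := hbc
          exact hgu ▸ hTclosed b ih u hu hadj
      have hSsubT : S x ⊆ T := fun y hy => hreach y (Finset.mem_filter.mp hy).2
      exact hT.not_subset hSsubT
    · -- x ∉ T
      have : T \ {x} = T := by
        apply Finset.sdiff_eq_self_of_disjoint
        simp [hxT]
      rw [this] at hle
      rw [hgd]; omega
  -- injectivity of S on U₀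
  have hSinj : Set.InjOn S ↑U₀ := by
    intro a ha b hb hab
    by_contra hne
    have hbS : b ∈ S a := hab ▸ hSx b (Finset.mem_sdiff.mp hb).1
    rcases hmemS a b hbS with h | h
    · exact hne h.symm
    · exact (Finset.mem_sdiff.mp hb).2 h
  -- the union is X
  set X' : Finset V := U₀.biUnion S with hX'
  have hX'X : X' ⊆ X := by
    intro y hy
    rw [hX', Finset.mem_biUnion] at hy
    obtain ⟨x, _, hyx⟩ := hy
    exact hSsub x hyx
  have hX'closed : ∀ y ∈ X', ∀ u ∈ N, G.Adj y u → g u ∈ X' := by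
    intro y hy u hu hadj
    rw [hX', Finset.mem_biUnion] at hy ⊢
    obtain ⟨x, hxU, hyx⟩ := hy
    exact ⟨x, hxU, hSclosed x y hyx u hu hadj⟩
  have hU₀X' : U₀ ⊆ X' := by
    intro x hx
    rw [hX', Finset.mem_biUnion]
    exact ⟨x, hx, hSx x (Finset.mem_sdiff.mp hx).1⟩
  have hX'U₀ : X' ∩ U₀ = U₀ := Finset.inter_eq_right.mpr hU₀X'
  have hX'card := key X' hX'X hX'closed
  rw [hX'U₀, hU₀card] at hX'card
  have hX'gdiff : gdiff G X' = (k : ℤ) := by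
    have h6 : gdiff G X' = ((X'.card : ℤ)) - ((nbhd G X').card : ℤ) := rfl
    rw [h6]; omega
  have hX'eq : X' = X := by
    by_contra hne
    have : X' ⊂ X := Finset.ssubset_iff_subset_ne.mpr ⟨hX'X, hne⟩
    have := hmin X' this
    rw [hX'gdiff, hk] at this
    omega
  -- assemble
  refine ⟨U₀.image S, ?_, ?_, ?_⟩
  · rw [Finset.card_image_of_injOn hSinj, hU₀card]
  · intro T hT
    rw [Finset.mem_image] at hT
    obtain ⟨x, hx, hxT⟩ := hT
    subst hxT
    exact ⟨by rw [hScard x hx]; norm_num, hSmin x hx⟩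
  · rw [Finset.image_biUnion]
    simpa using hX'eq.symm
end

section
/- If X ⊆ V(G) is a union of inclusion-minimal sets with positive difference, then X is an independent set, d(X) > 0, and every proper subset Y ⊊ X satisfies d(Y) < d(X). -/
open Classical Finset

lemma mem_nbhd' {V : Type*} (G : SimpleGraph V) [Fintype V] {X : Finset V} {v : V} :
    v ∈ nbhd G X ↔ ∃ x ∈ X, G.Adj x v := by
  simp [nbhd]

lemma nbhd_union' {V : Type*} (G : SimpleGraph V) [Fintype V] [DecidableEq V] (A B : Finset V) :
    nbhd G (A ∪ B) = nbhd G A ∪ nbhd G B := by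
  ext v
  simp only [mem_nbhd', Finset.mem_union]
  constructor
  · rintro ⟨x, hx | hx, ha⟩
    · exact Or.inl ⟨x, hx, ha⟩
    · exact Or.inr ⟨x, hx, ha⟩
  · rintro (⟨x, hx, ha⟩ | ⟨x, hx, ha⟩)
    · exact ⟨x, Or.inl hx, ha⟩
    · exact ⟨x, Or.inr hx, ha⟩

lemma gdiff_supermod {V : Type*} (G : SimpleGraph V) [Fintype V] [DecidableEq V]
    (A B : Finset V) :
    gdiff G A + gdiff G B ≤ gdiff G (A ∪ B) + gdiff G (A ∩ B) := by
  have h1 : nbhd G (A ∩ B) ⊆ nbhd G A ∩ nbhd G B := by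
    intro v hv
    rw [mem_nbhd'] at hv
    obtain ⟨x, hx, ha⟩ := hv
    exact Finset.mem_inter.2 ⟨(mem_nbhd' G).2 ⟨x, (Finset.mem_inter.1 hx).1, ha⟩,
      (mem_nbhd' G).2 ⟨x, (Finset.mem_inter.1 hx).2, ha⟩⟩
  have hc1 : (nbhd G (A ∩ B)).card ≤ (nbhd G A ∩ nbhd G B).card := Finset.card_le_card h1
  have hc2 : (nbhd G A ∪ nbhd G B).card + (nbhd G A ∩ nbhd G B).card
      = (nbhd G A).card + (nbhd G B).card := Finset.card_union_add_card_inter _ _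
  have hc3 : (A ∪ B).card + (A ∩ B).card = A.card + B.card :=
    Finset.card_union_add_card_inter _ _
  simp only [gdiff, nbhd_union']
  omega

/-- a union of inclusion-minimal sets with positive difference is
independent, has positive difference, and strictly dominates all proper subsets. -/
theorem stmt7 {V : Type*} (G : SimpleGraph V) [Fintype V] [DecidableEq V] [DecidableRel G.Adj]
    (X : Finset V) (𝒮 : Finset (Finset V)) (h𝒮 : 𝒮.Nonempty)
    (hmin : ∀ S ∈ 𝒮, 0 < gdiff G S ∧ ∀ T ⊂ S, gdiff G T ≤ 0)
    (hX : X = 𝒮.biUnion id) :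
    IsIndep G X ∧ 0 < gdiff G X ∧ ∀ Y ⊂ X, gdiff G Y < gdiff G X := by
  have hSX : ∀ S ∈ 𝒮, S ⊆ X := by
    intro S hS
    rw [hX]
    exact Finset.subset_biUnion_of_mem id hS
  -- Part (c): every proper subset has strictly smaller difference.
  have hc : ∀ Y ⊂ X, gdiff G Y < gdiff G X := by
    by_contra hcon
    push_neg at hcon
    obtain ⟨Y0, hY0X, hY0⟩ := hcon
    classical
    set P := X.powerset.filter (fun Y => Y ≠ X ∧ gdiff G X ≤ gdiff G Y) with hP
    have hPne : P.Nonempty := by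
      refine ⟨Y0, ?_⟩
      simp only [hP, Finset.mem_filter, Finset.mem_powerset]
      exact ⟨hY0X.subset, ne_of_ssubset hY0X, hY0⟩
    obtain ⟨Y, hYP, hmaxY⟩ := P.exists_max_image Finset.card hPne
    simp only [hP, Finset.mem_filter, Finset.mem_powerset] at hYP
    obtain ⟨hYsub, hYne, hYd⟩ := hYP
    have hex : ∃ x, x ∈ X ∧ x ∉ Y := by
      by_contra h
      push_neg at h
      exact hYne (Finset.Subset.antisymm hYsub (fun x hx => h x hx))
    obtain ⟨x, hxX, hxY⟩ := hex
    rw [hX] at hxX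
    obtain ⟨S, hS𝒮, hxS⟩ := Finset.mem_biUnion.1 hxX
    simp only [id] at hxS
    have hSpos := (hmin S hS𝒮).1
    have hint : Y ∩ S ⊂ S := by
      refine Finset.ssubset_iff_subset_ne.2 ⟨Finset.inter_subset_right, ?_⟩
      intro h
      exact hxY ((Finset.mem_inter.1 (h ▸ hxS)).1)
    have hintd : gdiff G (Y ∩ S) ≤ 0 := (hmin S hS𝒮).2 _ hint
    have hsup := gdiff_supermod G Y S
    have hsubX : Y ∪ S ⊆ X := Finset.union_subset hYsub (hSX S hS𝒮)
    by_cases hEq : Y ∪ S = X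
    · rw [hEq] at hsup
      linarith
    · have hmemP : Y ∪ S ∈ P := by
        simp only [hP, Finset.mem_filter, Finset.mem_powerset]
        exact ⟨hsubX, hEq, by linarith⟩
      have hcard := hmaxY _ hmemP
      have hss : Y ⊂ Y ∪ S := by
        refine Finset.ssubset_iff_subset_ne.2 ⟨Finset.subset_union_left, ?_⟩
        intro h
        exact hxY (h ▸ Finset.mem_union_right _ hxS)
      exact absurd (Finset.card_lt_card hss) (not_lt.2 hcard)
  -- Independence follows from (c).
  have hind : IsIndep G X := by
    intro a ha b hb hab
    have hbN : b ∈ nbhd G X := (mem_nbhd' G).2 ⟨a, ha, hab⟩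
    set C := X ∩ nbhd G X with hC
    have hbC : b ∈ C := Finset.mem_inter.2 ⟨hb, hbN⟩
    have hYss : X \ C ⊂ X :=
      Finset.sdiff_ssubset Finset.inter_subset_left ⟨b, hbC⟩
    have hNsub : nbhd G (X \ C) ⊆ nbhd G X \ C := by
      intro v hv
      rw [mem_nbhd'] at hv
      obtain ⟨u, hu, huv⟩ := hv
      have huX := (Finset.mem_sdiff.1 hu).1
      refine Finset.mem_sdiff.2 ⟨(mem_nbhd' G).2 ⟨u, huX, huv⟩, ?_⟩
      intro hvC
      have hvX := (Finset.mem_inter.1 hvC).1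
      have huN : u ∈ nbhd G X := (mem_nbhd' G).2 ⟨v, hvX, huv.symm⟩
      exact (Finset.mem_sdiff.1 hu).2 (Finset.mem_inter.2 ⟨huX, huN⟩)
    have h1 : (nbhd G (X \ C)).card ≤ (nbhd G X).card - C.card := by
      have h := Finset.card_le_card hNsub
      rwa [Finset.card_sdiff_of_subset Finset.inter_subset_right] at h
    have h2 : (X \ C).card = X.card - C.card :=
      Finset.card_sdiff_of_subset Finset.inter_subset_left
    have hC1 : C.card ≤ X.card := Finset.card_le_card Finset.inter_subset_left
    have hC2 : C.card ≤ (nbhd G X).card := Finset.card_le_card Finset.inter_subset_right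
    have h3 := hc _ hYss
    simp only [gdiff] at h3
    omega
  refine ⟨hind, ?_, hc⟩
  obtain ⟨S, hS⟩ := h𝒮
  have hSsub := hSX S hS
  rcases eq_or_ne S X with h | h
  · rw [← h]
    exact (hmin S hS).1
  · have := hc S (Finset.ssubset_iff_subset_ne.2 ⟨hSsub, h⟩)
    linarith [(hmin S hS).1]
end
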